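/- arXiv:2401.04936 — 4 statements merged into one kernel-verified Lean document; each statement's English description precedes it below -/
import Mathlib

section
/- Let k ≥ 1 be an integer and set p = 2k − 1. Fix h > 0, x̃ ∈ ℝ, and the 2k equispaced nodes y_j = x̃ + j·h for j = −k, …, k − 1. Let e : [x̃ − k·h, x̃ + (k−1)·h] → ℝ be p-times continuously differentiable, let E(x) := ∫_{x̃ − k·h}^{x} e(s) ds be its primitive, and let Q be the unique polynomial of degree at most p interpolating E at the 2k nodes y_{−k}, …, y_{k−1}. Let ε ∈ [0, 1] and set the departure point ξ̃ := x̃ − ε·h. Then there exists φ ∈ (x̃ − k·h, x̃ + (k−1)·h) such that the semi-Lagrangian numerical flux error satisfies ∫_{ξ̃}^{x̃} (Q′(x) − e(x)) dx = h^{p+1} · g_{p+1}(ε) · e^{(p)}(φ), where g_{p+1}(z) := (1/(p+1)!) · ∏_{j=−k}^{k−1} (z + j). -/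
/-!
Write `F = E - Q`. Since `(Q - E)' = Q' - e` and `F` vanishes at the interface `x̃` (a node), the
flux error is `∫_{ξ̃}^{x̃} (Q' - e) = F(ξ̃)`. The Lagrange interpolation error formula gives
`F(ξ̃) = W(ξ̃) F⁽²ᵏ⁾(φ) / (2k)!` with `W` the nodal polynomial of the `2k` interfaces: if `ξ̃` is
not a node, `W(ξ̃) F - F(ξ̃) W` has `2k + 1` zeros, so by Rolle's theorem applied `2k` times its
`2k`-th derivative `W(ξ̃) F⁽²ᵏ⁾ - F(ξ̃) (2k)!` vanishes somewhere. Finally `F⁽²ᵏ⁾ = E⁽²ᵏ⁾ = e⁽ᵖ⁾`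
because `deg Q ≤ p`, and `W(ξ̃) = ∏ (-h)(ε + j) = h²ᵏ ∏ (ε + j)`.
-/

open Set Polynomial intervalIntegral
open scoped Finset

namespace Polynomial

variable {𝕜 : Type*} [NontriviallyNormedField 𝕜]

theorem iteratedDerivWithin_eval {s : Set 𝕜} (hs : UniqueDiffOn 𝕜 s) (n : ℕ) (P : 𝕜[X]) {x : 𝕜}
    (hx : x ∈ s) :
    iteratedDerivWithin n (fun t => P.eval t) s x = (derivative^[n] P).eval x := by
  induction n generalizing P with
  | zero => simp
  | succ n ih =>
    have hderiv : Set.EqOn (derivWithin (fun t => P.eval t) s) (fun t => P.derivative.eval t) s :=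
      fun y hy => P.derivWithin (hs y hy)
    rw [iteratedDerivWithin_succ', iteratedDerivWithin_congr hderiv hx, ih,
      Function.iterate_succ_apply]

theorem contDiff_eval (P : 𝕜[X]) {n : WithTop ℕ∞} : ContDiff 𝕜 n fun x => P.eval x := by
  simpa using P.contDiff_aeval (𝕜 := 𝕜) n

end Polynomial

theorem Polynomial.Monic.iterate_derivative_natDegree {R : Type*} [Semiring R] {P : R[X]}
    (hP : P.Monic) : derivative^[P.natDegree] P = C (P.natDegree.factorial : R) := by
  have hdeg : (derivative^[P.natDegree] P).natDegree ≤ 0 :=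
    (natDegree_iterate_derivative P _).trans_eq (Nat.sub_self _)
  rw [eq_C_of_natDegree_le_zero hdeg, coeff_iterate_derivative, zero_add, hP.coeff_natDegree,
    Nat.descFactorial_self, nsmul_one]

theorem Lagrange.iterate_derivative_nodal {R ι : Type*} [CommRing R] [Nontrivial R] (s : Finset ι)
    (v : ι → R) : derivative^[#s] (nodal s v) = C ((#s).factorial : R) := by
  simpa only [natDegree_nodal] using (nodal_monic (s := s) (v := v)).iterate_derivative_natDegree

theorem Lagrange.eval_nodal_affine {s : Finset ℤ} (hs : Even #s) (x h ε : ℝ) :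
    (nodal s fun j : ℤ => x + j * h).eval (x - ε * h) = h ^ #s * ∏ j ∈ s, (ε + j) := by
  rw [eval_nodal, Finset.prod_congr rfl fun (j : ℤ) _ =>
      show x - ε * h - (x + j * h) = -h * (ε + j) by ring,
    Finset.prod_mul_distrib, Finset.prod_const, hs.neg_pow]

theorem exists_strictMono_derivWithin_eq_zero {a b : ℝ} {f : ℝ → ℝ} (hf : ContinuousOn f (Icc a b))
    {m : ℕ} {x : Fin (m + 2) → ℝ} (hx : StrictMono x) (hxab : ∀ i, x i ∈ Icc a b)
    (hfx : ∀ i, f (x i) = 0) :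
    ∃ y : Fin (m + 1) → ℝ, StrictMono y ∧ (∀ i, y i ∈ Ioo (x i.castSucc) (x i.succ)) ∧
      ∀ i, derivWithin f (Icc a b) (y i) = 0 := by
  have rolle (i : Fin (m + 1)) : ∃ c ∈ Ioo (x i.castSucc) (x i.succ), deriv f c = 0 :=
    exists_deriv_eq_zero (hx i.castSucc_lt_succ)
      (hf.mono (Icc_subset_Icc (hxab _).1 (hxab _).2)) ((hfx _).trans (hfx _).symm)
  choose y hy hfy using rolle
  refine ⟨y, fun i j hij => ?_, hy, fun i => ?_⟩
  · calc y i < x i.succ := (hy i).2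
      _ ≤ x j.castSucc := hx.monotone (Fin.succ_le_castSucc_iff.2 hij)
      _ < y j := (hy j).1
  · rw [derivWithin_of_mem_nhds (Icc_mem_nhds ((hxab _).1.trans_lt (hy i).1)
      ((hy i).2.trans_le (hxab _).2)), hfy]

theorem exists_iteratedDerivWithin_eq_zero_of_strictMono {a b : ℝ} {m : ℕ} {f : ℝ → ℝ}
    (hf : ContDiffOn ℝ (m + 1 : ℕ) f (Icc a b)) {x : Fin (m + 2) → ℝ} (hx : StrictMono x)
    (hxab : ∀ i, x i ∈ Icc a b) (hfx : ∀ i, f (x i) = 0) :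
    ∃ c ∈ Ioo (x 0) (x (Fin.last _)), iteratedDerivWithin (m + 1) f (Icc a b) c = 0 := by
  induction m generalizing f with
  | zero =>
    obtain ⟨y, -, hy, hfy⟩ := exists_strictMono_derivWithin_eq_zero hf.continuousOn hx hxab hfx
    exact ⟨y 0, hy 0, by simpa using hfy 0⟩
  | succ m ih =>
    have hab : a < b := (hxab 0).1.trans_lt ((hx Fin.last_pos).trans_le (hxab _).2)
    obtain ⟨y, hy, hyx, hfy⟩ := exists_strictMono_derivWithin_eq_zero hf.continuousOn hx hxab hfx
    have hyab (i : Fin (m + 2)) : y i ∈ Icc a b :=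
      ⟨(hxab _).1.trans (hyx i).1.le, (hyx i).2.le.trans (hxab _).2⟩
    have hf' : ContDiffOn ℝ (m + 1 : ℕ) (derivWithin f (Icc a b)) (Icc a b) :=
      hf.derivWithin (uniqueDiffOn_Icc hab) (by push_cast; rfl)
    obtain ⟨c, hc, hf'c⟩ := ih hf' hy hyab hfy
    refine ⟨c, ⟨(hyx 0).1.trans hc.1, hc.2.trans (hyx _).2⟩, ?_⟩
    rwa [iteratedDerivWithin_succ']

theorem exists_iteratedDerivWithin_eq_zero_of_card {a b : ℝ} {m : ℕ} {f : ℝ → ℝ}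
    (hf : ContDiffOn ℝ (m + 1 : ℕ) f (Icc a b)) {t : Finset ℝ} (ht : #t = m + 2)
    (htab : ∀ x ∈ t, x ∈ Icc a b) (hft : ∀ x ∈ t, f x = 0) :
    ∃ c ∈ Ioo a b, iteratedDerivWithin (m + 1) f (Icc a b) c = 0 := by
  have hmem := t.orderEmbOfFin_mem ht
  obtain ⟨c, hc, hfc⟩ := exists_iteratedDerivWithin_eq_zero_of_strictMono hf
    (t.orderEmbOfFin ht).strictMono (fun i => htab _ (hmem i)) (fun i => hft _ (hmem i))
  exact ⟨c, ⟨(htab _ (hmem 0)).1.trans_lt hc.1, hc.2.trans_le (htab _ (hmem _)).2⟩, hfc⟩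

open Lagrange in
theorem exists_eq_eval_nodal_mul_iteratedDerivWithin {ι : Type*} {a b : ℝ} (hab : a < b) {n : ℕ}
    {f : ℝ → ℝ} (hf : ContDiffOn ℝ (n + 1 : ℕ) f (Icc a b)) {s : Finset ι} {v : ι → ℝ}
    (hs : #s = n + 1) (hv : Set.InjOn v s) (hvab : ∀ i ∈ s, v i ∈ Icc a b)
    (hfv : ∀ i ∈ s, f (v i) = 0) {ξ : ℝ} (hξ : ξ ∈ Icc a b) :
    ∃ φ ∈ Ioo a b, f ξ =
      (nodal s v).eval ξ * iteratedDerivWithin (n + 1) f (Icc a b) φ / (n + 1).factorial := by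
  by_cases hnode : ξ ∈ s.image v
  · obtain ⟨i, hi, rfl⟩ := Finset.mem_image.1 hnode
    refine ⟨(a + b) / 2, ⟨by linarith, by linarith⟩, ?_⟩
    rw [hfv i hi, eval_nodal_at_node hi, zero_mul, zero_div]
  set W := nodal s v
  set G : ℝ → ℝ := fun t => W.eval ξ * f t - f ξ * W.eval t
  have hW : ContDiffOn ℝ (n + 1 : ℕ) (fun t => W.eval t) (Icc a b) := W.contDiff_eval.contDiffOn
  have hG : ContDiffOn ℝ (n + 1 : ℕ) G (Icc a b) :=
    (contDiffOn_const.mul hf).sub (contDiffOn_const.mul hW)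
  have hcard : #(insert ξ (s.image v)) = n + 2 := by
    rw [Finset.card_insert_of_notMem hnode, Finset.card_image_of_injOn hv, hs]
  have hzeros : ∀ t ∈ insert ξ (s.image v), t ∈ Icc a b ∧ G t = 0 := by
    simp only [Finset.mem_insert, Finset.mem_image]
    rintro t (rfl | ⟨i, hi, rfl⟩)
    · exact ⟨hξ, by ring⟩
    · refine ⟨hvab i hi, ?_⟩
      change W.eval ξ * f (v i) - f ξ * W.eval (v i) = 0
      rw [hfv i hi, eval_nodal_at_node hi]
      ring
  obtain ⟨φ, hφ, hGφ⟩ := exists_iteratedDerivWithin_eq_zero_of_card hG hcard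
    (fun t ht => (hzeros t ht).1) (fun t ht => (hzeros t ht).2)
  have hφ' : φ ∈ Icc a b := Ioo_subset_Icc_self hφ
  have hWφ : iteratedDerivWithin (n + 1) (fun t => W.eval t) (Icc a b) φ = (n + 1).factorial := by
    rw [W.iteratedDerivWithin_eval (uniqueDiffOn_Icc hab) _ hφ', ← hs, iterate_derivative_nodal,
      eval_C]
  have hGφ' : iteratedDerivWithin (n + 1) G (Icc a b) φ =
      W.eval ξ * iteratedDerivWithin (n + 1) f (Icc a b) φ - f ξ * (n + 1).factorial := by
    rw [← hWφ, ← iteratedDerivWithin_const_mul_field, ← iteratedDerivWithin_const_mul_field]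
    exact iteratedDerivWithin_sub hφ' (uniqueDiffOn_Icc hab)
      ((contDiffOn_const.mul hf) φ hφ') ((contDiffOn_const.mul hW) φ hφ')
  refine ⟨φ, hφ, ?_⟩
  rw [eq_div_iff (by positivity)]
  linarith

open Lagrange in
theorem exists_sub_eval_eq_eval_nodal_mul_iteratedDerivWithin {ι : Type*} {a b : ℝ} (hab : a < b)
    {n : ℕ} {f : ℝ → ℝ} (hf : ContDiffOn ℝ (n + 1 : ℕ) f (Icc a b)) {Q : ℝ[X]}
    (hQ : Q.natDegree ≤ n) {s : Finset ι} {v : ι → ℝ} (hs : #s = n + 1) (hv : Set.InjOn v s)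
    (hvab : ∀ i ∈ s, v i ∈ Icc a b) (hQv : ∀ i ∈ s, Q.eval (v i) = f (v i)) {ξ : ℝ}
    (hξ : ξ ∈ Icc a b) :
    ∃ φ ∈ Ioo a b, f ξ - Q.eval ξ =
      (nodal s v).eval ξ * iteratedDerivWithin (n + 1) f (Icc a b) φ / (n + 1).factorial := by
  have hQ' : ContDiffOn ℝ (n + 1 : ℕ) (fun t => Q.eval t) (Icc a b) := Q.contDiff_eval.contDiffOn
  obtain ⟨φ, hφ, herr⟩ := exists_eq_eval_nodal_mul_iteratedDerivWithin hab (hf.sub hQ') hs hv hvab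
    (fun i hi => sub_eq_zero.2 (hQv i hi).symm) hξ
  have hφ' : φ ∈ Icc a b := Ioo_subset_Icc_self hφ
  refine ⟨φ, hφ, ?_⟩
  change _ = _ * iteratedDerivWithin (n + 1) (f - fun t => Q.eval t) _ φ / _ at herr
  rwa [iteratedDerivWithin_sub hφ' (uniqueDiffOn_Icc hab) (hf φ hφ') (hQ' φ hφ'),
    Q.iteratedDerivWithin_eval (uniqueDiffOn_Icc hab) _ hφ', iterate_derivative_eq_zero (by omega),
    eval_zero, sub_zero] at herr

theorem ContinuousOn.hasDerivWithinAt_integral_Icc {E : Type*} [NormedAddCommGroup E]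
    [NormedSpace ℝ E] [CompleteSpace E] {a b x : ℝ} {f : ℝ → E} (hf : ContinuousOn f (Icc a b))
    (hx : x ∈ Icc a b) : HasDerivWithinAt (fun u => ∫ t in a..u, f t) (f x) (Icc a b) x := by
  have : Fact (x ∈ Icc a b) := ⟨hx⟩
  refine integral_hasDerivWithinAt_right ?_
    ⟨_, self_mem_nhdsWithin, hf.aestronglyMeasurable measurableSet_Icc⟩ (hf x hx)
  exact (hf.mono (Set.uIcc_subset_Icc (left_mem_Icc.2 (hx.1.trans hx.2)) hx)).intervalIntegrable

section Primitive

variable {𝕜 F : Type*} [NontriviallyNormedField 𝕜] [NormedAddCommGroup F] [NormedSpace 𝕜 F]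
  {s : Set 𝕜} {g f : 𝕜 → F}

theorem contDiffOn_succ_of_hasDerivWithinAt (hs : UniqueDiffOn 𝕜 s)
    (hg : ∀ x ∈ s, HasDerivWithinAt g (f x) s x) {n : ℕ} (hf : ContDiffOn 𝕜 n f s) :
    ContDiffOn 𝕜 (n + 1 : ℕ) g s := by
  push_cast
  refine (contDiffOn_succ_iff_derivWithin hs).2 ⟨fun x hx => (hg x hx).differentiableWithinAt,
    by simp, hf.congr fun x hx => (hg x hx).derivWithin (hs x hx)⟩

theorem iteratedDerivWithin_succ_of_hasDerivWithinAt (hs : UniqueDiffOn 𝕜 s)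
    (hg : ∀ x ∈ s, HasDerivWithinAt g (f x) s x) (n : ℕ) {x : 𝕜} (hx : x ∈ s) :
    iteratedDerivWithin (n + 1) g s x = iteratedDerivWithin n f s x := by
  rw [iteratedDerivWithin_succ']
  exact iteratedDerivWithin_congr (fun y hy => (hg y hy).derivWithin (hs y hy)) hx

end Primitive

theorem integral_eval_derivative_sub_eq {a x y : ℝ} {e : ℝ → ℝ} (Q : ℝ[X])
    (hx : IntervalIntegrable e MeasureTheory.volume a x)
    (hy : IntervalIntegrable e MeasureTheory.volume a y) :
    ∫ t in x..y, ((derivative Q).eval t - e t) =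
      (Q.eval y - ∫ t in a..y, e t) - (Q.eval x - ∫ t in a..x, e t) := by
  rw [integral_sub (Q.derivative.continuous.intervalIntegrable _ _) (hx.symm.trans hy),
    integral_eq_sub_of_hasDerivAt (fun t _ => Q.hasDerivAt t)
      (Q.derivative.continuous.intervalIntegrable _ _), ← integral_interval_sub_left hy hx]
  ring

/-- Error of the semi-Lagrangian numerical flux: the reconstruction `Q'` is the
derivative of the polynomial interpolant of the primitive `E` of `e` at the
`2k` interfaces of a stencil of `p = 2k - 1` cells. -/
theorem semiLagrangian_flux_error
    (k : ℕ) (hk : 1 ≤ k) (h xt : ℝ) (hh : 0 < h)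
    (e : ℝ → ℝ)
    (he : ContDiffOn ℝ (2 * k - 1 : ℕ) e (Icc (xt - k * h) (xt + ((k : ℝ) - 1) * h)))
    (E : ℝ → ℝ) (hE : ∀ x, E x = ∫ s in (xt - k * h)..x, e s)
    (Q : Polynomial ℝ) (hdeg : Q.natDegree ≤ 2 * k - 1)
    (hinterp : ∀ j ∈ Finset.Icc (-(k : ℤ)) ((k : ℤ) - 1),
      Q.eval (xt + (j : ℝ) * h) = E (xt + (j : ℝ) * h))
    (ε : ℝ) (hε : ε ∈ Icc (0 : ℝ) 1) :
    ∃ φ ∈ Ioo (xt - k * h) (xt + ((k : ℝ) - 1) * h),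
      (∫ x in (xt - ε * h)..xt, ((Polynomial.derivative Q).eval x - e x))
        = h ^ ((2 * k - 1 : ℕ) + 1)
          * ((1 / (Nat.factorial ((2 * k - 1) + 1) : ℝ))
              * ∏ j ∈ Finset.Icc (-(k : ℤ)) ((k : ℤ) - 1), (ε + (j : ℝ)))
          * iteratedDerivWithin (2 * k - 1) e
              (Icc (xt - k * h) (xt + ((k : ℝ) - 1) * h)) φ := by
  obtain rfl : E = fun x => ∫ s in (xt - k * h)..x, e s := funext hE
  set a := xt - k * h
  set b := xt + ((k : ℝ) - 1) * h
  set J := Finset.Icc (-(k : ℤ)) ((k : ℤ) - 1)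
  have hk' : (1 : ℝ) ≤ k := by exact_mod_cast hk
  have hab : a < b := by nlinarith
  have hmem : ∀ j ∈ J, xt + (j : ℝ) * h ∈ Icc a b := fun j hj => by
    obtain ⟨hj₁, hj₂⟩ := Finset.mem_Icc.1 hj
    have : -(k : ℝ) ≤ j ∧ (j : ℝ) ≤ k - 1 := ⟨by exact_mod_cast hj₁, by exact_mod_cast hj₂⟩
    constructor <;> nlinarith
  have hξ : xt - ε * h ∈ Icc a b := by
    obtain ⟨hε₀, hε₁⟩ := hε
    constructor <;> nlinarith
  have h0J : (0 : ℤ) ∈ J := Finset.mem_Icc.2 ⟨by omega, by omega⟩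
  have hxt : xt ∈ Icc a b := by simpa using hmem 0 h0J
  have hQxt : Q.eval xt = ∫ s in a..xt, e s := by simpa using hinterp 0 h0J
  have hcard : #J = (2 * k - 1) + 1 := by simp [J]; omega
  have hinj : Set.InjOn (fun j : ℤ => xt + (j : ℝ) * h) J := fun i _ j _ hij => by
    simpa [hh.ne'] using hij
  have hint : ∀ x ∈ Icc a b, IntervalIntegrable e MeasureTheory.volume a x := fun x hx =>
    (he.continuousOn.mono (Set.uIcc_subset_Icc (left_mem_Icc.2 hab.le) hx)).intervalIntegrable
  have hprim : ∀ x ∈ Icc a b, HasDerivWithinAt (fun u => ∫ t in a..u, e t) (e x) (Icc a b) x :=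
    fun x hx => he.continuousOn.hasDerivWithinAt_integral_Icc hx
  obtain ⟨φ, hφ, herr⟩ := exists_sub_eval_eq_eval_nodal_mul_iteratedDerivWithin hab
    (contDiffOn_succ_of_hasDerivWithinAt (uniqueDiffOn_Icc hab) hprim he) hdeg hcard hinj hmem
    hinterp hξ
  refine ⟨φ, hφ, ?_⟩
  rw [integral_eval_derivative_sub_eq Q (hint _ hξ) (hint _ hxt), hQxt, sub_self, zero_sub, neg_sub,
    herr, Lagrange.eval_nodal_affine ⟨k, by omega⟩, hcard,
    iteratedDerivWithin_succ_of_hasDerivWithinAt (uniqueDiffOn_Icc hab) hprim _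
      (Ioo_subset_Icc_self hφ)]
  ring
end

section
/- Let N ≥ 1, let L and E be real N×N matrices, let q ≥ 1 be an integer, and let c ∈ ℝ. For δt > 0 define the explicit Runge–Kutta time-stepping matrix Φ(δt) := Σ_{j=0}^{q} (δt)^j L^j / j! + (1/(q+1)! + c)·(δt)^{q+1} L^{q+1} (so that Φ(δt) = exp(δt·L) + c·(δt·L)^{q+1} + O((δt·L)^{q+2})). Then there exists a constant C > 0, depending only on q and c, such that for every δt > 0 with δt·(‖L‖ + ‖E‖) ≤ 1 (operator norm), the one-step truncation-error operator satisfies ‖ I − Φ(δt)·exp(−δt·(L + E)) − δt·E + c·(δt)^{q+1} L^{q+1} ‖ ≤ C·( δt²·‖E‖·(‖L‖ + ‖E‖) + δt^{q+2}·‖L‖^{q+2} ). -/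
open scoped Matrix.Norms.L2Operator Nat
open NormedSpace Finset

/-!
With `A = δt • L` and `B = δt • E`, the Runge–Kutta operator is `Φ = T(A) + c • A ^ (q + 1)`,
where `T` is the Taylor polynomial of `exp` of degree `q + 1`. Since `exp A * exp (-A) = 1`,
the truncation error splits as
`(exp A - T(A)) exp (-(A + B)) - exp A (exp (-(A + B)) - exp (-A) + B) + (exp A - 1) B
  + c A ^ (q + 1) (1 - exp (-(A + B)))`,
and when `‖A‖ + ‖B‖ ≤ 1` every piece is controlled by an exponential series tail whose terms
decay at least like `(1/2) ^ n`.
-/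

lemma inv_factorial_add_le_half_pow {k : ℕ} (hk : 1 ≤ k) (n : ℕ) :
    ((n + k)! : ℝ)⁻¹ ≤ (1 / 2) ^ n := by
  have h : 2 ^ n ≤ (n + k)! :=
    calc 2 ^ n ≤ (1 + n)! := by simpa using Nat.factorial_mul_pow_le_factorial (m := 1) (n := n)
      _ ≤ (n + k)! := Nat.factorial_le (by omega)
  rw [one_div, inv_pow, inv_le_inv₀ (by positivity) (by positivity)]
  exact_mod_cast h

lemma norm_tsum_le_two_mul_of_le_half_pow {E : Type*} [SeminormedAddCommGroup E] {f : ℕ → E}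
    {K : ℝ} (h : ∀ n, ‖f n‖ ≤ K * (1 / 2) ^ n) : ‖∑' n, f n‖ ≤ 2 * K := by
  simpa [mul_comm] using tsum_of_norm_bounded (hasSum_geometric_two.mul_left K) h

lemma norm_pow_sub_pow_le {R : Type*} [SeminormedRing R] {x y : R} {m : ℝ}
    (hx : ‖x‖ ≤ m) (hy : ‖y‖ ≤ m) (n : ℕ) :
    ‖y ^ (n + 1) - x ^ (n + 1)‖ ≤ (n + 1) * ‖y - x‖ * m ^ n := by
  induction n with
  | zero => simp
  | succ n ih =>
    have hm : 0 ≤ m := (norm_nonneg x).trans hx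
    have hsplit : y ^ (n + 2) - x ^ (n + 2) = y ^ (n + 1) * (y - x) + (y ^ (n + 1) - x ^ (n + 1)) * x := by
      rw [pow_succ y (n + 1), pow_succ x (n + 1)]; noncomm_ring
    have hy' : ‖y ^ (n + 1)‖ ≤ m ^ (n + 1) :=
      (norm_pow_le' y n.succ_pos).trans (pow_le_pow_left₀ (norm_nonneg _) hy _)
    calc ‖y ^ (n + 2) - x ^ (n + 2)‖
        ≤ ‖y ^ (n + 1)‖ * ‖y - x‖ + ‖y ^ (n + 1) - x ^ (n + 1)‖ * ‖x‖ := by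
          rw [hsplit]
          exact (norm_add_le _ _).trans (add_le_add (norm_mul_le _ _) (norm_mul_le _ _))
      _ ≤ m ^ (n + 1) * ‖y - x‖ + ((n + 1) * ‖y - x‖ * m ^ n) * m := by gcongr
      _ = ((n + 1 : ℕ) + 1) * ‖y - x‖ * m ^ (n + 1) := by push_cast; ring

section Exp

variable {𝔸 : Type*} [NormedRing 𝔸] [NormedAlgebra ℝ 𝔸] [CompleteSpace 𝔸]

lemma exp_sub_sum_range_eq_tsum (x : 𝔸) (k : ℕ) :
    exp x - ∑ j ∈ range k, (j ! : ℝ)⁻¹ • x ^ j = ∑' n, ((n + k)! : ℝ)⁻¹ • x ^ (n + k) := by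
  rw [congrFun (exp_eq_tsum (𝕂 := ℝ)) x,
    ← (expSeries_summable' (𝕂 := ℝ) x).sum_add_tsum_nat_add k]
  abel

lemma norm_exp_sub_sum_range_le {x : 𝔸} (hx : ‖x‖ ≤ 1) {k : ℕ} (hk : 1 ≤ k) :
    ‖exp x - ∑ j ∈ range k, (j ! : ℝ)⁻¹ • x ^ j‖ ≤ 2 * ‖x‖ ^ k := by
  rw [exp_sub_sum_range_eq_tsum]
  refine norm_tsum_le_two_mul_of_le_half_pow fun n => ?_
  have hpow : ‖x ^ (n + k)‖ ≤ ‖x‖ ^ k :=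
    calc ‖x ^ (n + k)‖ ≤ ‖x‖ ^ n * ‖x‖ ^ k := by rw [← pow_add]; exact norm_pow_le' x (by omega)
      _ ≤ 1 * ‖x‖ ^ k := by gcongr; exact pow_le_one₀ (norm_nonneg x) hx
      _ = ‖x‖ ^ k := one_mul _
  rw [norm_smul, norm_inv, RCLike.norm_natCast, mul_comm (‖x‖ ^ k)]
  exact mul_le_mul (inv_factorial_add_le_half_pow hk n) hpow (norm_nonneg _) (by positivity)

lemma norm_exp_sub_one_le {x : 𝔸} (hx : ‖x‖ ≤ 1) : ‖exp x - 1‖ ≤ 2 * ‖x‖ := by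
  simpa using norm_exp_sub_sum_range_le hx le_rfl

lemma norm_exp_sub_exp_sub_sub_le {x y : 𝔸} {m : ℝ} (hx : ‖x‖ ≤ m) (hy : ‖y‖ ≤ m) (hm : m ≤ 1) :
    ‖exp y - exp x - (y - x)‖ ≤ 2 * (‖y - x‖ * m) := by
  have hm0 : 0 ≤ m := (norm_nonneg x).trans hx
  have hdiff : exp y - exp x - (y - x) = (exp y - ∑ j ∈ range 2, (j ! : ℝ)⁻¹ • y ^ j)
      - (exp x - ∑ j ∈ range 2, (j ! : ℝ)⁻¹ • x ^ j) := by
    simp [sum_range_succ]; abel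
  have htail (z : 𝔸) : Summable fun n => ((n + 2)! : ℝ)⁻¹ • z ^ (n + 2) :=
    (summable_nat_add_iff 2).mpr (expSeries_summable' (𝕂 := ℝ) z)
  rw [hdiff, exp_sub_sum_range_eq_tsum, exp_sub_sum_range_eq_tsum,
    ← (htail y).tsum_sub (htail x)]
  refine norm_tsum_le_two_mul_of_le_half_pow fun n => ?_
  have hfac : ((n + 2)! : ℝ) = (n + 2) * (n + 1)! := by
    rw [Nat.factorial_succ]; push_cast; ring
  calc ‖((n + 2)! : ℝ)⁻¹ • y ^ (n + 2) - ((n + 2)! : ℝ)⁻¹ • x ^ (n + 2)‖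
      = ((n + 2)! : ℝ)⁻¹ * ‖y ^ (n + 1 + 1) - x ^ (n + 1 + 1)‖ := by
        rw [← smul_sub, norm_smul, norm_inv, RCLike.norm_natCast]
    _ ≤ ((n + 2)! : ℝ)⁻¹ * ((n + 1 + 1 : ℕ) * ‖y - x‖ * m ^ (n + 1)) := by
        gcongr; exact_mod_cast norm_pow_sub_pow_le hx hy (n + 1)
    _ = ((n + 1)! : ℝ)⁻¹ * (‖y - x‖ * m ^ n * m) := by
        rw [hfac]; field_simp; push_cast; ring
    _ ≤ (1 / 2) ^ n * (‖y - x‖ * 1 * m) := by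
        gcongr
        · exact inv_factorial_add_le_half_pow le_rfl n
        · exact pow_le_one₀ hm0 hm
    _ = ‖y - x‖ * m * (1 / 2) ^ n := by ring

lemma exp_mul_exp_neg (x : 𝔸) : exp x * exp (-x) = 1 := by
  -- `exp_add_of_commute` is stated for Banach algebras over `ℚ`
  let +nondep : NormedAlgebra ℚ 𝔸 := .restrictScalars ℚ ℝ 𝔸
  rw [← exp_add_of_commute (Commute.neg_right rfl), add_neg_cancel, exp_zero]

lemma norm_mul_exp_le (w : 𝔸) {x : 𝔸} (hx : ‖x‖ ≤ 1) : ‖w * exp x‖ ≤ 3 * ‖w‖ :=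
  calc ‖w * exp x‖ = ‖w * (exp x - 1) + w‖ := by noncomm_ring
    _ ≤ ‖w‖ * (2 * 1) + ‖w‖ := by
      grw [norm_add_le, norm_mul_le, norm_exp_sub_one_le hx, hx]
    _ = 3 * ‖w‖ := by ring

lemma norm_exp_mul_le (w : 𝔸) {x : 𝔸} (hx : ‖x‖ ≤ 1) : ‖exp x * w‖ ≤ 3 * ‖w‖ :=
  calc ‖exp x * w‖ = ‖(exp x - 1) * w + w‖ := by noncomm_ring
    _ ≤ 2 * 1 * ‖w‖ + ‖w‖ := by
      grw [norm_add_le, norm_mul_le, norm_exp_sub_one_le hx, hx]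
    _ = 3 * ‖w‖ := by ring

end Exp

/-- The stability function `R` of the method, `Φ(δt) = R(δt • L)`. -/
noncomputable def rkStabilityFun {𝔸 : Type*} [Ring 𝔸] [Algebra ℝ 𝔸] (q : ℕ) (c : ℝ) (x : 𝔸) : 𝔸 :=
  ∑ j ∈ range (q + 2), (j ! : ℝ)⁻¹ • x ^ j + c • x ^ (q + 1)

lemma sum_smul_pow_add_smul_pow_eq_rkStabilityFun {𝔸 : Type*} [Ring 𝔸] [Algebra ℝ 𝔸]
    (q : ℕ) (c t : ℝ) (x : 𝔸) :
    ∑ j ∈ range (q + 1), (t ^ j / (j ! : ℝ)) • x ^ j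
        + ((1 / ((q + 1)! : ℝ) + c) * t ^ (q + 1)) • x ^ (q + 1)
      = rkStabilityFun q c (t • x) := by
  simp only [rkStabilityFun, sum_range_succ _ (q + 1), smul_pow, smul_smul, add_assoc,
    ← add_smul]
  congr 1
  · refine sum_congr rfl fun j _ => ?_
    rw [div_eq_inv_mul]
  · ring_nf

lemma one_sub_add_mul_sub_add_eq {R : Type*} [Ring R] {x z : R} (hxz : x * z = 1)
    (p m y b : R) :
    1 - (p + m) * y - b + m = (x - p) * y - x * (y - z + b) + (x - 1) * b + m * (1 - y) := by
  simp only [mul_sub, sub_mul, mul_add, add_mul, mul_one, one_mul, hxz]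
  abel

lemma norm_one_sub_rkStabilityFun_mul_exp_le {𝔸 : Type*} [NormedRing 𝔸] [NormedAlgebra ℝ 𝔸]
    [CompleteSpace 𝔸] {a b : 𝔸} (hab : ‖a‖ + ‖b‖ ≤ 1) (q : ℕ) (c : ℝ) :
    ‖1 - rkStabilityFun q c a * exp (-(a + b)) - b + c • a ^ (q + 1)‖
      ≤ (8 + 2 * |c|) * (‖b‖ * (‖a‖ + ‖b‖) + ‖a‖ ^ (q + 2)) := by
  have ha : ‖a‖ ≤ 1 := by linarith [norm_nonneg b]
  have hneg : ‖-(a + b)‖ ≤ ‖a‖ + ‖b‖ := (norm_neg _).trans_le (norm_add_le a b)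
  have hsplit := one_sub_add_mul_sub_add_eq (exp_mul_exp_neg a) (∑ j ∈ range (q + 2), (j ! : ℝ)⁻¹ • a ^ j)
    (c • a ^ (q + 1)) (exp (-(a + b))) b
  rw [rkStabilityFun, hsplit]
  have h₁ : ‖(exp a - ∑ j ∈ range (q + 2), (j ! : ℝ)⁻¹ • a ^ j) * exp (-(a + b))‖
      ≤ 3 * (2 * ‖a‖ ^ (q + 2)) := by
    grw [norm_mul_exp_le _ (hneg.trans hab), norm_exp_sub_sum_range_le ha (by omega)]
  have h₂ : ‖exp a * (exp (-(a + b)) - exp (-a) + b)‖ ≤ 3 * (2 * (‖b‖ * (‖a‖ + ‖b‖))) := by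
    have hdiff := norm_exp_sub_exp_sub_sub_le (x := -a) (y := -(a + b)) (m := ‖a‖ + ‖b‖)
      (by rw [norm_neg]; linarith [norm_nonneg b]) hneg hab
    rw [show -(a + b) - -a = -b by abel, norm_neg, sub_neg_eq_add] at hdiff
    grw [norm_exp_mul_le _ ha, hdiff]
  have h₃ : ‖(exp a - 1) * b‖ ≤ 2 * ‖a‖ * ‖b‖ := by
    grw [norm_mul_le, norm_exp_sub_one_le ha]
  have h₄ : ‖c • a ^ (q + 1) * (1 - exp (-(a + b)))‖ ≤ |c| * ‖a‖ ^ (q + 1) * (2 * (‖a‖ + ‖b‖)) := by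
    grw [norm_mul_le]
    rw [norm_sub_rev 1, norm_smul, Real.norm_eq_abs]
    grw [norm_pow_le' a q.succ_pos, norm_exp_sub_one_le (hneg.trans hab), hneg]
  grw [norm_add_le, norm_add_le, norm_sub_le, h₁, h₂, h₃, h₄]
  have hpow : ‖a‖ ^ (q + 1) * ‖b‖ ≤ ‖a‖ * ‖b‖ := by
    gcongr; exact pow_le_of_le_one (norm_nonneg a) ha q.succ_ne_zero
  have hc := mul_le_mul_of_nonneg_left hpow (abs_nonneg c)
  rw [pow_succ ‖a‖ (q + 1)]
  have : 0 ≤ ‖a‖ ^ (q + 1) * ‖a‖ := by positivity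
  have : 0 ≤ |c| * (‖b‖ * ‖b‖) := by positivity
  linarith [mul_self_nonneg ‖b‖]

theorem runge_kutta_truncation_error_bound_general (q : ℕ) (c : ℝ) :
    ∃ C : ℝ, 0 < C ∧
      ∀ (N : ℕ), 1 ≤ N → ∀ (L E : Matrix (Fin N) (Fin N) ℝ), ∀ δt : ℝ, 0 < δt →
        δt * (‖L‖ + ‖E‖) ≤ 1 →
        ‖(1 : Matrix (Fin N) (Fin N) ℝ)
            - (∑ j ∈ Finset.range (q + 1), ((δt ^ j / (Nat.factorial j : ℝ)) • L ^ j)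
                + ((1 / (Nat.factorial (q + 1) : ℝ) + c) * δt ^ (q + 1)) • L ^ (q + 1))
              * NormedSpace.exp (-(δt • (L + E)))
            - δt • E + (c * δt ^ (q + 1)) • L ^ (q + 1)‖
          ≤ C * (δt ^ 2 * ‖E‖ * (‖L‖ + ‖E‖) + δt ^ (q + 2) * ‖L‖ ^ (q + 2)) := by
  refine ⟨8 + 2 * |c|, by positivity, fun N _ L E δt hδt hsmall => ?_⟩
  have hL : ‖δt • L‖ = δt * ‖L‖ := norm_smul_of_nonneg hδt.le L
  have hE : ‖δt • E‖ = δt * ‖E‖ := norm_smul_of_nonneg hδt.le E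
  have hbound := norm_one_sub_rkStabilityFun_mul_exp_le (a := δt • L) (b := δt • E)
    (by rw [hL, hE, ← mul_add]; exact hsmall) q c
  rw [sum_smul_pow_add_smul_pow_eq_rkStabilityFun, smul_add, ← smul_smul, ← smul_pow]
  convert hbound using 2
  rw [hL, hE]
  ring

/-- One-step truncation-error bound for an explicit Runge–Kutta method whose
stability polynomial matches the exponential to order `q` with error constant `c`,
applied to the semi-discrete system generated by `L + E`.  The constant `C`
depends only on `q` and `c`. -/
theorem runge_kutta_truncation_error_bound (q : ℕ) (hq : 1 ≤ q) (c : ℝ) :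
    ∃ C : ℝ, 0 < C ∧
      ∀ (N : ℕ), 1 ≤ N → ∀ (L E : Matrix (Fin N) (Fin N) ℝ), ∀ δt : ℝ, 0 < δt →
        δt * (‖L‖ + ‖E‖) ≤ 1 →
        ‖(1 : Matrix (Fin N) (Fin N) ℝ)
            - (∑ j ∈ Finset.range (q + 1), ((δt ^ j / (Nat.factorial j : ℝ)) • L ^ j)
                + ((1 / (Nat.factorial (q + 1) : ℝ) + c) * δt ^ (q + 1)) • L ^ (q + 1))
              * NormedSpace.exp (-(δt • (L + E)))
            - δt • E + (c * δt ^ (q + 1)) • L ^ (q + 1)‖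
          ≤ C * (δt ^ 2 * ‖E‖ * (‖L‖ + ‖E‖) + δt ^ (q + 2) * ‖L‖ ^ (q + 2)) :=
  runge_kutta_truncation_error_bound_general q c
end

section
/- Let k ≥ 1 be an integer, ℓ ∈ {0, …, k−1}, h > 0, and a ∈ ℝ. Consider the cell I = [a, a+h] and the left-shifted stencil of k contiguous cells with interfaces y_j = a − ℓ·h + j·h for j = 0, …, k, covering [a − ℓ·h, a + (k−ℓ)·h]. Let u : [a − ℓ·h, a + (k−ℓ)·h] → ℝ be (k+1)-times continuously differentiable, and let q be the reconstruction polynomial of u on this stencil. Then there exist points ξ̃, ξ ∈ (a − ℓ·h, a + (k−ℓ)·h) such that the reconstructions at the left and right interfaces of I satisfy q(a) = u(a) − ((−h)^k · ζ̃ / (k+1)!) · u^{(k)}(ξ̃) with ζ̃ = (−1)^ℓ · ℓ! · (k−ℓ)!, and q(a+h) = u(a+h) − ((−h)^k · ζ / (k+1)!) · u^{(k)}(ξ) with ζ = (−1)^{ℓ+1} · (ℓ+1)! · (k−ℓ−1)!. -/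
/-!
Write `F` for the primitive of `u` and `W` for the nodal polynomial of the `k + 1` interfaces.
At an interface `x₀`, choose `K` so that `u - (Q + K W)'` vanishes at `x₀`. Since
`F - (Q + K W)` vanishes at all `k + 1` interfaces, Rolle's theorem yields `k` further zeros of
`u - (Q + K W)'` strictly between consecutive interfaces, and `k` more applications of Rolle's
theorem give `ξ` with `u⁽ᵏ⁾(ξ) = K (k + 1)!`. Hence
`u(x₀) - Q'(x₀) = W'(x₀) u⁽ᵏ⁾(ξ) / (k + 1)!`, and for the equispaced interface `x₀ = y_m`
the product `W'(x₀) = ∏_{j ≠ m} (m - j) h` is `(-h)^k` times a sign and two factorials.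
-/

open Set Polynomial intervalIntegral

theorem exists_finset_derivWithin_eq_zero {f : ℝ → ℝ} {a b : ℝ}
    (hf : ContinuousOn f (Icc a b)) {s : Finset ℝ} (hs : ↑s ⊆ Icc a b)
    (hzero : ∀ x ∈ s, f x = 0) :
    ∃ t : Finset ℝ, ↑t ⊆ Ioo a b ∧ s.card ≤ (t \ s).card + 1 ∧
      ∀ x ∈ t, derivWithin f (Icc a b) x = 0 := by
  have rolle : ∀ x ∈ s, ∀ y ∈ s, x < y → ∃ c ∈ Ioo x y, deriv f c = 0 :=
    fun x hx y hy hxy => exists_deriv_eq_zero hxy (hf.mono (Icc_subset_Icc (hs hx).1 (hs hy).2))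
      ((hzero x hx).trans (hzero y hy).symm)
  choose! c hc using rolle
  let pairs := (s ×ˢ s).filter fun p => p.1 < p.2
  have hpairs {x y : ℝ} : (x, y) ∈ pairs ↔ x ∈ s ∧ y ∈ s ∧ x < y := by
    simp [pairs, and_assoc]
  have hzeros : ∀ z ∈ pairs.image fun p => c p.1 p.2,
      z ∈ Ioo a b ∧ derivWithin f (Icc a b) z = 0 := by
    intro z hz
    obtain ⟨⟨x, y⟩, hp, rfl⟩ := Finset.mem_image.1 hz
    obtain ⟨hx, hy, hxy⟩ := hpairs.1 hp
    have hc' := Ioo_subset_Ioo (hs hx).1 (hs hy).2 (hc x hx y hy hxy).1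
    rw [derivWithin_of_mem_nhds (Icc_mem_nhds hc'.1 hc'.2)]
    exact ⟨hc', (hc x hx y hy hxy).2⟩
  refine ⟨_, fun z hz => (hzeros z hz).1, ?_, fun z hz => (hzeros z hz).2⟩
  exact Finset.card_le_sdiff_of_interleaved fun x hx y hy hxy _ =>
    ⟨c x y, Finset.mem_image_of_mem _ (hpairs.2 ⟨hx, hy, hxy⟩), (hc x hx y hy hxy).1⟩

theorem exists_iteratedDerivWithin_eq_zero {f : ℝ → ℝ} {a b : ℝ} {n : ℕ} (hn : 0 < n)
    (hf : ContDiffOn ℝ n f (Icc a b)) {s : Finset ℝ} (hs : ↑s ⊆ Icc a b)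
    (hcard : n < s.card) (hzero : ∀ x ∈ s, f x = 0) :
    ∃ ξ ∈ Ioo a b, iteratedDerivWithin n f (Icc a b) ξ = 0 := by
  induction n, hn using Nat.le_induction generalizing f s with
  | base =>
    obtain ⟨t, hts, hcard', hderiv⟩ :=
      exists_finset_derivWithin_eq_zero hf.continuousOn hs hzero
    obtain ⟨ξ, hξ⟩ : (t \ s).Nonempty := Finset.card_pos.1 (by omega)
    have hξt := (Finset.mem_sdiff.1 hξ).1
    exact ⟨ξ, hts hξt, by rw [iteratedDerivWithin_one, hderiv ξ hξt]⟩
  | succ n hn ih =>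
    obtain ⟨t, hts, hcard', hderiv⟩ :=
      exists_finset_derivWithin_eq_zero hf.continuousOn hs hzero
    obtain ⟨ξ, hξ⟩ : (t \ s).Nonempty := Finset.card_pos.1 (by omega)
    have hξt := (Finset.mem_sdiff.1 hξ).1
    have hab : a < b := (hts hξt).1.trans (hts hξt).2
    have hf' : ContDiffOn ℝ n (derivWithin f (Icc a b)) (Icc a b) :=
      hf.derivWithin (uniqueDiffOn_Icc hab) (by norm_cast)
    rw [iteratedDerivWithin_succ']
    exact ih hf' (s := t \ s) (fun x hx => Ioo_subset_Icc_self (hts (Finset.mem_sdiff.1 hx).1))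
      (by omega) fun x hx => hderiv x (Finset.mem_sdiff.1 hx).1

theorem Polynomial.iterate_deriv_eval {𝕜 : Type*} [NontriviallyNormedField 𝕜] (p : 𝕜[X])
    (n : ℕ) : deriv^[n] (fun x => p.eval x) = fun x => (derivative^[n] p).eval x := by
  induction n generalizing p with
  | zero => rfl
  | succ n ih =>
    have hderiv : _root_.deriv (fun x => p.eval x) = fun x => p.derivative.eval x := by
      ext x
      exact p.deriv
    rw [Function.iterate_succ_apply, Function.iterate_succ_apply, hderiv, ih]

theorem Polynomial.contDiff_eval_s6 {𝕜 : Type*} [NontriviallyNormedField 𝕜] (p : 𝕜[X])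
    (n : WithTop ℕ∞) : ContDiff 𝕜 n fun x => p.eval x := by
  simpa only [aeval_def, eval₂_eq_eval_map, Algebra.algebraMap_self, Polynomial.map_id] using
    p.contDiff_aeval (R := 𝕜) (𝕜 := 𝕜) n

theorem Polynomial.iteratedDerivWithin_eval_s6 {𝕜 : Type*} [NontriviallyNormedField 𝕜]
    (p : 𝕜[X]) (n : ℕ) {s : Set 𝕜} {x : 𝕜} (hs : UniqueDiffOn 𝕜 s) (hx : x ∈ s) :
    iteratedDerivWithin n (fun x => p.eval x) s x = (derivative^[n] p).eval x := by
  rw [iteratedDerivWithin_eq_iteratedDeriv hs (p.contDiff_eval_s6 n).contDiffAt hx,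
    iteratedDeriv_eq_iterate, iterate_deriv_eval]

theorem Polynomial.iterate_derivative_natDegree {R : Type*} [Semiring R] (p : R[X]) :
    derivative^[p.natDegree] p = C (p.natDegree.factorial * p.leadingCoeff) := by
  have hdeg : (derivative^[p.natDegree] p).natDegree ≤ 0 := by
    simpa using natDegree_iterate_derivative p p.natDegree
  rw [eq_C_of_natDegree_le_zero hdeg, coeff_iterate_derivative, zero_add, Nat.descFactorial_self,
    nsmul_eq_mul, leadingCoeff]

theorem prod_range_natCast_sub_self {R : Type*} [CommRing R] (m : ℕ) :
    ∏ j ∈ Finset.range m, ((j : R) - m) = (-1) ^ m * m.factorial := by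
  induction m with
  | zero => simp
  | succ m ih =>
    rw [Finset.prod_range_succ', Nat.factorial_succ]
    push_cast
    simp only [add_sub_add_right_eq_sub, ih]
    ring

theorem prod_erase_range_natCast_sub {R : Type*} [CommRing R] {k m : ℕ} (hm : m ≤ k) :
    ∏ j ∈ (Finset.range (k + 1)).erase m, ((j : R) - m)
      = (-1) ^ m * m.factorial * (k - m).factorial := by
  induction k, hm using Nat.le_induction with
  | base =>
    rw [Finset.range_add_one, Finset.erase_insert Finset.notMem_range_self,
      prod_range_natCast_sub_self, Nat.sub_self, Nat.factorial_zero, Nat.cast_one, mul_one]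
  | succ k hmk ih =>
    rw [Finset.range_add_one, Finset.erase_insert_of_ne (by omega), Finset.prod_insert (by simp),
      ih, Nat.succ_sub hmk, Nat.factorial_succ]
    push_cast [Nat.cast_sub hmk]
    ring

theorem prod_erase_range_sub_of_equispaced {R : Type*} [CommRing R] (c h : R) {k m : ℕ}
    (hm : m ≤ k) :
    ∏ j ∈ (Finset.range (k + 1)).erase m, ((c + m * h) - (c + j * h))
      = (-h) ^ k * ((-1) ^ m * m.factorial * (k - m).factorial) := by
  have hmem : m ∈ Finset.range (k + 1) := Finset.mem_range.2 (by omega)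
  calc ∏ j ∈ (Finset.range (k + 1)).erase m, ((c + m * h) - (c + j * h))
      = ∏ j ∈ (Finset.range (k + 1)).erase m, (((j : R) - m) * -h) :=
        Finset.prod_congr rfl fun j _ => by ring
    _ = (-h) ^ k * ((-1) ^ m * m.factorial * (k - m).factorial) := by
      rw [Finset.prod_mul_distrib, Finset.prod_const, Finset.card_erase_of_mem hmem,
        Finset.card_range, prod_erase_range_natCast_sub hm, Nat.add_sub_cancel, mul_comm]

theorem ContinuousOn.hasDerivAt_integral_of_mem_Ioo {E : Type*} [NormedAddCommGroup E]
    [NormedSpace ℝ E] [CompleteSpace E] {u : ℝ → E} {a b x : ℝ}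
    (hu : ContinuousOn u (Icc a b)) (hx : x ∈ Ioo a b) :
    HasDerivAt (fun y => ∫ t in a..y, u t) (u x) x :=
  integral_hasDerivAt_right
    ((hu.mono (Icc_subset_Icc_right hx.2.le)).intervalIntegrable_of_Icc hx.1.le)
    ((hu.mono Ioo_subset_Icc_self).stronglyMeasurableAtFilter isOpen_Ioo x hx)
    (hu.continuousAt (Icc_mem_nhds hx.1 hx.2))

theorem exists_iteratedDerivWithin_eq_iterate_derivative_eval {F u : ℝ → ℝ} {a b : ℝ}
    {n : ℕ} (hn : 0 < n) (hF : ContinuousOn F (Icc a b))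
    (hFu : ∀ x ∈ Ioo a b, HasDerivAt F (u x) x)
    (hu : ContDiffOn ℝ n u (Icc a b)) (S : ℝ[X]) {T : Finset ℝ} (hT : ↑T ⊆ Icc a b)
    (hcard : n + 1 ≤ T.card) (hFS : ∀ x ∈ T, F x = S.eval x) {x₀ : ℝ} (hx₀ : x₀ ∈ T)
    (huS : u x₀ = S.derivative.eval x₀) :
    ∃ ξ ∈ Ioo a b, iteratedDerivWithin n u (Icc a b) ξ = (derivative^[n + 1] S).eval ξ := by
  obtain ⟨t, hts, hcard', hderiv⟩ := exists_finset_derivWithin_eq_zero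
    (hF.sub (S.contDiff_eval_s6 0).continuous.continuousOn) hT
    fun x hx => sub_eq_zero.2 (hFS x hx)
  have hzero : ∀ x ∈ insert x₀ (t \ T), u x - S.derivative.eval x = 0 := by
    intro x hx
    rcases Finset.mem_insert.1 hx with rfl | hx
    · exact sub_eq_zero.2 huS
    · have hxt := (Finset.mem_sdiff.1 hx).1
      rw [← hderiv x hxt, derivWithin_of_mem_nhds (Icc_mem_nhds (hts hxt).1 (hts hxt).2),
        ((hFu x (hts hxt)).sub (S.hasDerivAt x)).deriv]
  have hsub : ↑(insert x₀ (t \ T)) ⊆ Icc a b := by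
    rw [Finset.coe_insert, insert_subset_iff]
    exact ⟨hT hx₀, fun x hx => Ioo_subset_Icc_self (hts (Finset.mem_sdiff.1 hx).1)⟩
  have hcard'' : n < (insert x₀ (t \ T)).card := by
    rw [Finset.card_insert_of_notMem (Finset.notMem_sdiff_of_mem_right hx₀)]
    omega
  obtain ⟨ξ, hξ, hGξ⟩ := exists_iteratedDerivWithin_eq_zero hn
    (hu.sub (S.derivative.contDiff_eval_s6 n).contDiffOn) hsub hcard'' hzero
  have hξ' : ξ ∈ Icc a b := Ioo_subset_Icc_self hξ
  have hab : UniqueDiffOn ℝ (Icc a b) := uniqueDiffOn_Icc (hξ.1.trans hξ.2)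
  refine ⟨ξ, hξ, ?_⟩
  change iteratedDerivWithin n (u - fun x => S.derivative.eval x) (Icc a b) ξ = 0 at hGξ
  rwa [iteratedDerivWithin_sub hξ' hab (hu.contDiffWithinAt hξ')
    (S.derivative.contDiff_eval_s6 n).contDiffWithinAt,
    S.derivative.iteratedDerivWithin_eval_s6 n hab hξ',
    ← Function.iterate_succ_apply, sub_eq_zero] at hGξ

theorem exists_eval_derivative_eq_of_interpolates {ι : Type*} [DecidableEq ι] {F u : ℝ → ℝ}
    {a b : ℝ} {n : ℕ} (hn : 0 < n) (hF : ContinuousOn F (Icc a b))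
    (hFu : ∀ x ∈ Ioo a b, HasDerivAt F (u x) x) (hu : ContDiffOn ℝ n u (Icc a b))
    {s : Finset ι} {v : ι → ℝ} (hvs : Set.InjOn v s) (hv : ∀ i ∈ s, v i ∈ Icc a b)
    (hcard : s.card = n + 1) {P : ℝ[X]} (hP : P.natDegree ≤ n)
    (hPF : ∀ i ∈ s, P.eval (v i) = F (v i)) {i : ι} (hi : i ∈ s) :
    ∃ ξ ∈ Ioo a b, P.derivative.eval (v i) = u (v i)
      - (∏ j ∈ s.erase i, (v i - v j)) / (n + 1).factorial
        * iteratedDerivWithin n u (Icc a b) ξ := by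
  set W := Lagrange.nodal s v
  set D := ∏ j ∈ s.erase i, (v i - v j)
  have hWD : W.derivative.eval (v i) = D := by
    rw [Lagrange.eval_nodal_derivative_eval_node_eq hi, Lagrange.eval_nodal]
  have hD : D ≠ 0 := Finset.prod_ne_zero_iff.2 fun j hj => sub_ne_zero.2 fun h =>
    (Finset.mem_erase.1 hj).1 (hvs (Finset.mem_of_mem_erase hj) hi h.symm)
  have hW : derivative^[n + 1] W = C ((n + 1).factorial : ℝ) := by
    rw [← hcard, ← Lagrange.natDegree_nodal (v := v), iterate_derivative_natDegree,
      Lagrange.nodal_monic.leadingCoeff, mul_one]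
  set K := (u (v i) - P.derivative.eval (v i)) / D
  have hS : derivative^[n + 1] (P + C K * W) = C (K * (n + 1).factorial) := by
    rw [iterate_map_add, iterate_derivative_C_mul, iterate_derivative_eq_zero (by omega),
      hW, zero_add, C_mul]
  have hFS : ∀ x ∈ s.image v, F x = (P + C K * W).eval x := by
    intro x hx
    obtain ⟨j, hj, rfl⟩ := Finset.mem_image.1 hx
    rw [eval_add, eval_mul, Lagrange.eval_nodal_at_node hj, mul_zero, add_zero, hPF j hj]
  have huS : u (v i) = (P + C K * W).derivative.eval (v i) := by
    rw [derivative_add, derivative_C_mul, eval_add, eval_mul, eval_C, hWD, div_mul_cancel₀ _ hD]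
    ring
  obtain ⟨ξ, hξ, hξeq⟩ := exists_iteratedDerivWithin_eq_iterate_derivative_eval hn hF hFu hu
    (P + C K * W) (by rw [Finset.coe_image]; exact image_subset_iff.2 hv)
    ((Finset.card_image_of_injOn hvs).trans hcard).ge hFS (Finset.mem_image_of_mem v hi) huS
  refine ⟨ξ, hξ, ?_⟩
  rw [hξeq, hS, eval_C]
  field_simp
  rw [mul_div_cancel₀ _ hD]
  ring

/-- Error estimates at the two interfaces of cell `[a, a+h]` for the
finite-volume reconstruction polynomial on a left-shifted stencil of `k` cells. -/
theorem shifted_reconstruction_error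
    (k : ℕ) (hk : 1 ≤ k) (ℓ : ℕ) (hℓ : ℓ < k) (h a : ℝ) (hh : 0 < h)
    (u : ℝ → ℝ)
    (hu : ContDiffOn ℝ (k + 1) u (Icc (a - ℓ * h) (a + ((k : ℝ) - ℓ) * h)))
    (U : ℝ → ℝ) (hU : ∀ x, U x = ∫ s in (a - ℓ * h)..x, u s)
    (Q : Polynomial ℝ) (hdeg : Q.natDegree ≤ k)
    (hinterp : ∀ j ∈ Finset.range (k + 1),
      Q.eval (a - ℓ * h + j * h) = U (a - ℓ * h + j * h)) :
    (∃ ξt ∈ Ioo (a - ℓ * h) (a + ((k : ℝ) - ℓ) * h),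
      (Polynomial.derivative Q).eval a
        = u a - ((-h) ^ k * ((-1 : ℝ) ^ ℓ * (Nat.factorial ℓ) * (Nat.factorial (k - ℓ)))
            / (Nat.factorial (k + 1) : ℝ))
          * iteratedDerivWithin k u (Icc (a - ℓ * h) (a + ((k : ℝ) - ℓ) * h)) ξt) ∧
    (∃ ξ ∈ Ioo (a - ℓ * h) (a + ((k : ℝ) - ℓ) * h),
      (Polynomial.derivative Q).eval (a + h)
        = u (a + h) - ((-h) ^ k * ((-1 : ℝ) ^ (ℓ + 1) * (Nat.factorial (ℓ + 1))
              * (Nat.factorial (k - ℓ - 1)))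
            / (Nat.factorial (k + 1) : ℝ))
          * iteratedDerivWithin k u (Icc (a - ℓ * h) (a + ((k : ℝ) - ℓ) * h)) ξ) := by
  set A := a - ℓ * h
  set B := a + ((k : ℝ) - ℓ) * h
  obtain rfl : U = fun x => ∫ s in A..x, u s := funext hU
  have hnode_mem : ∀ j ∈ Finset.range (k + 1), A + j * h ∈ Icc A B := by
    intro j hj
    have hjk : (j : ℝ) ≤ k := by exact_mod_cast Finset.mem_range_succ_iff.1 hj
    constructor <;> nlinarith [(Nat.cast_nonneg j : (0 : ℝ) ≤ j)]
  have hcont : ContinuousOn u (Icc A B) := hu.continuousOn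
  have hF : ContinuousOn (fun x => ∫ s in A..x, u s) (Icc A B) := by
    have hAB : A ≤ B := (hnode_mem 0 (by simp)).2.trans' (by simp)
    simpa only [uIcc_of_le hAB] using
      continuousOn_primitive_interval (hcont.integrableOn_Icc.mono_set (uIcc_of_le hAB).subset)
  have node : ∀ m ≤ k, ∃ ξ ∈ Ioo A B, (derivative Q).eval (A + m * h) = u (A + m * h)
      - (-h) ^ k * ((-1) ^ m * m.factorial * (k - m).factorial) / (k + 1).factorial
        * iteratedDerivWithin k u (Icc A B) ξ := by
    intro m hm
    rw [← prod_erase_range_sub_of_equispaced A h hm]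
    exact exists_eval_derivative_eq_of_interpolates hk hF
      (fun x hx => hcont.hasDerivAt_integral_of_mem_Ioo hx) (hu.of_le (by norm_cast; omega))
      (fun i _ j _ hij => by simpa [hh.ne'] using hij) hnode_mem (Finset.card_range _) hdeg
      hinterp (Finset.mem_range_succ_iff.2 hm)
  obtain ⟨ξt, hξt, hleft⟩ := node ℓ hℓ.le
  obtain ⟨ξ, hξ, hright⟩ := node (ℓ + 1) hℓ
  refine ⟨⟨ξt, hξt, ?_⟩, ⟨ξ, hξ, ?_⟩⟩
  · rwa [sub_add_cancel] at hleft
  · have hnode : A + ((ℓ + 1 : ℕ) : ℝ) * h = a + h := by push_cast; ring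
    rwa [hnode, ← Nat.sub_sub] at hright
end

section
/- Let α : ℝ × [t₀, t₁] → ℝ be continuously differentiable and let e : ℝ × [t₀, t₁] → ℝ be continuously differentiable and satisfy the linear conservation law ∂e/∂t(x, t) + ∂(α·e)/∂x(x, t) = 0 for all (x, t) ∈ ℝ × [t₀, t₁]. Let x_a ≤ x_b be real numbers and let ξ_a, ξ_b : [t₀, t₁] → ℝ be continuously differentiable characteristic curves satisfying ξ_a′(t) = α(ξ_a(t), t), ξ_b′(t) = α(ξ_b(t), t), with arrival conditions ξ_a(t₁) = x_a and ξ_b(t₁) = x_b. Then ∫_{x_a}^{x_b} e(x, t₁) dx = ∫_{ξ_a(t₀)}^{ξ_b(t₀)} e(x, t₀) dx. -/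
/-!
Write `M(y, t) = ∫₀ʸ e(x, t) dx`. Then `∂_y M = e`, and by the conservation law and the
fundamental theorem of calculus `∂ₜ M(y, t) = (α e)(0, t) - (α e)(y, t)`. Along a characteristic
`ξ' = α(ξ, t)` the chain rule therefore gives `d/dt M(ξ(t), t) = (α e)(0, t)`: the flux through
`ξ(t)` cancels, and what is left does not depend on the curve. So the mass
`M(ξ_b(t), t) - M(ξ_a(t), t)` between two characteristics has zero derivative on `(t₀, t₁)`, and
being continuous on `[t₀, t₁]` it is constant.
-/

open Set Filter Topology intervalIntegral

theorem ContinuousOn.continuous_slice_of_mem {F : Type*} [TopologicalSpace F] {f : ℝ × ℝ → F}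
    {I : Set ℝ} (hf : ContinuousOn f (univ ×ˢ I)) {t : ℝ} (ht : t ∈ I) :
    Continuous fun x => f (x, t) :=
  hf.comp_continuous (continuous_id.prodMk continuous_const) fun _ => ⟨trivial, ht⟩

section Calculus

variable {E : Type*} [NormedAddCommGroup E] [NormedSpace ℝ E]

theorem HasDerivAt.comp_graph_of_partials {f f₁ f₂ : ℝ → ℝ → E} {ξ : ℝ → ℝ} {ξ' τ : ℝ}
    (df₁ : ∀ᶠ v in 𝓝 (ξ τ, τ), HasDerivAt (f · v.2) (f₁ v.1 v.2) v.1)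
    (df₂ : ∀ᶠ v in 𝓝 (ξ τ, τ), HasDerivAt (f v.1 ·) (f₂ v.1 v.2) v.2)
    (cf₁ : ContinuousAt ↿f₁ (ξ τ, τ)) (cf₂ : ContinuousAt ↿f₂ (ξ τ, τ)) (hξ : HasDerivAt ξ ξ' τ) :
    HasDerivAt (fun t => f (ξ t) t) (ξ' • f₁ (ξ τ) τ + f₂ (ξ τ) τ) τ := by
  let toCLM : E →L[ℝ] ℝ →L[ℝ] E := ContinuousLinearMap.smulRightL ℝ ℝ E 1
  have hf := (hasStrictFDerivAt_uncurry_coprod (f₁ := fun y t => toCLM (f₁ y t))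
    (f₂ := fun y t => toCLM (f₂ y t)) (df₁.mono fun _ hv => hv.hasFDerivAt)
    (df₂.mono fun _ hv => hv.hasFDerivAt) (toCLM.continuous.continuousAt.comp cf₁)
    (toCLM.continuous.continuousAt.comp cf₂)).hasFDerivAt
  simpa [toCLM, Function.comp_def, Function.HasUncurry.uncurry] using
    HasFDerivAt.comp_hasDerivAt (f := fun t => (ξ t, t)) τ hf (hξ.prodMk (hasDerivAt_id τ))

theorem HasFDerivAt.hasDerivAt_slice_fst {f : ℝ × ℝ → E} {f' : ℝ × ℝ →L[ℝ] E} {y t : ℝ}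
    (hf : HasFDerivAt f f' (y, t)) : HasDerivAt (fun x => f (x, t)) (f' (1, 0)) y :=
  hf.comp_hasDerivAt (f := fun x => (x, t)) y ((hasDerivAt_id y).prodMk (hasDerivAt_const y t))

theorem HasFDerivAt.hasDerivAt_slice_snd {f : ℝ × ℝ → E} {f' : ℝ × ℝ →L[ℝ] E} {y t : ℝ}
    (hf : HasFDerivAt f f' (y, t)) : HasDerivAt (fun s => f (y, s)) (f' (0, 1)) t :=
  hf.comp_hasDerivAt (f := fun s => (y, s)) t ((hasDerivAt_const t y).prodMk (hasDerivAt_id t))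

section Strip

variable {I : Set ℝ} {f : ℝ × ℝ → E}

theorem ContDiffOn.hasFDerivAt_of_mem_strip (hI : IsOpen I) (hf : ContDiffOn ℝ 1 f (univ ×ˢ I))
    {p : ℝ × ℝ} (hp : p.2 ∈ I) : HasFDerivAt f (fderiv ℝ f p) p :=
  ((hf.differentiableOn one_ne_zero).differentiableAt
    ((isOpen_univ.prod hI).mem_nhds ⟨trivial, hp⟩)).hasFDerivAt

theorem ContDiffOn.continuousOn_fderiv_apply_strip (hI : IsOpen I)
    (hf : ContDiffOn ℝ 1 f (univ ×ˢ I)) (v : ℝ × ℝ) :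
    ContinuousOn (fun p => fderiv ℝ f p v) (univ ×ˢ I) :=
  (hf.continuousOn_fderiv_of_isOpen (isOpen_univ.prod hI) le_rfl).clm_apply continuousOn_const

theorem ContDiffOn.hasDerivAt_intervalIntegral_strip (hI : IsOpen I)
    (hf : ContDiffOn ℝ 1 f (univ ×ˢ I)) {τ : ℝ} (hτ : τ ∈ I) (a b : ℝ) :
    HasDerivAt (fun t => ∫ x in a..b, f (x, t)) (∫ x in a..b, fderiv ℝ f (x, τ) (0, 1)) τ := by
  obtain ⟨δ, hδ, hball⟩ := Metric.isOpen_iff.mp hI τ hτ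
  have hKI : uIcc a b ×ˢ Metric.closedBall τ (δ / 2) ⊆ univ ×ˢ I :=
    prod_mono (subset_univ _) ((Metric.closedBall_subset_ball (by linarith)).trans hball)
  have hderiv := hf.continuousOn_fderiv_apply_strip hI (0, 1)
  obtain ⟨C, hC⟩ :=
    (isCompact_uIcc.prod (isCompact_closedBall τ (δ / 2))).exists_bound_of_continuousOn
      (hderiv.mono hKI)
  have hcont : ∀ t ∈ I, Continuous fun x => f (x, t) :=
    fun t ht => hf.continuousOn.continuous_slice_of_mem ht
  refine (intervalIntegral.hasDerivAt_integral_of_dominated_loc_of_deriv_le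
    (bound := fun _ => C) (Metric.ball_mem_nhds τ (half_pos hδ))
    (eventually_of_mem (hI.mem_nhds hτ) fun t ht => (hcont t ht).aestronglyMeasurable)
    ((hcont τ hτ).intervalIntegrable a b)
    (hderiv.continuous_slice_of_mem hτ).aestronglyMeasurable
    (Eventually.of_forall fun x hx t ht =>
      hC (x, t) ⟨uIoc_subset_uIcc hx, Metric.ball_subset_closedBall ht⟩)
    intervalIntegrable_const (Eventually.of_forall fun x _ t ht => ?_)).2
  exact (hf.hasFDerivAt_of_mem_strip hI (p := (x, t))
    (hball (Metric.ball_subset_ball (by linarith) ht))).hasDerivAt_slice_snd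

end Strip

end Calculus

noncomputable def cumulativeMass (e : ℝ × ℝ → ℝ) (y t : ℝ) : ℝ := ∫ x in (0 : ℝ)..y, e (x, t)

theorem continuousOn_cumulativeMass {e : ℝ × ℝ → ℝ} {t₀ t₁ : ℝ} (h : t₀ ≤ t₁)
    (he : ContinuousOn e (univ ×ˢ Icc t₀ t₁)) :
    ContinuousOn (fun p : ℝ × ℝ => cumulativeMass e p.1 p.2) (univ ×ˢ Icc t₀ t₁) := by
  -- Clamping time to `[t₀, t₁]` makes the integrand continuous on the whole plane.
  let clamp : ℝ → ℝ := fun t => projIcc t₀ t₁ h t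
  have hclamp : Continuous fun q : ℝ × ℝ => e (q.2, clamp q.1) :=
    he.comp_continuous (continuous_snd.prodMk (continuous_subtype_val.comp
      (continuous_projIcc.comp continuous_fst))) fun q => ⟨trivial, Subtype.coe_prop _⟩
  have := (continuous_parametric_primitive_of_continuous (μ := MeasureTheory.volume) (a₀ := 0)
    (f := fun t x => e (x, clamp t)) hclamp).comp (continuous_snd.prodMk continuous_fst)
  refine this.continuousOn.congr fun p hp => ?_
  simp only [Function.comp_apply, cumulativeMass, clamp, projIcc_of_mem h hp.2]

theorem continuousOn_cumulativeMass_along {e : ℝ × ℝ → ℝ} {t₀ t₁ : ℝ} (h : t₀ ≤ t₁)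
    (he : ContinuousOn e (univ ×ˢ Icc t₀ t₁)) {ξ : ℝ → ℝ} (hξ : ContinuousOn ξ (Icc t₀ t₁)) :
    ContinuousOn (fun t => cumulativeMass e (ξ t) t) (Icc t₀ t₁) :=
  (continuousOn_cumulativeMass h he).comp (hξ.prodMk continuousOn_id) fun _ ht => ⟨trivial, ht⟩

section ConservationLaw

variable {I : Set ℝ} {α e : ℝ × ℝ → ℝ}

theorem hasDerivAt_cumulativeMass_time (hI : IsOpen I) (hα : ContDiffOn ℝ 1 α (univ ×ˢ I))
    (he : ContDiffOn ℝ 1 e (univ ×ˢ I))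
    (hpde : ∀ x : ℝ, ∀ t ∈ I,
      deriv (fun s => e (x, s)) t + deriv (fun y => α (y, t) * e (y, t)) x = 0)
    (y : ℝ) {t : ℝ} (ht : t ∈ I) :
    HasDerivAt (cumulativeMass e y) (α (0, t) * e (0, t) - α (y, t) * e (y, t)) t := by
  have hq : ContDiffOn ℝ 1 (fun p => α p * e p) (univ ×ˢ I) := hα.mul he
  have hflux : ∀ x, HasDerivAt (fun z => α (z, t) * e (z, t))
      (fderiv ℝ (fun p => α p * e p) (x, t) (1, 0)) x :=
    fun x => (hq.hasFDerivAt_of_mem_strip hI (p := (x, t)) ht).hasDerivAt_slice_fst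
  have hbalance : ∀ x, fderiv ℝ e (x, t) (0, 1) = -fderiv ℝ (fun p => α p * e p) (x, t) (1, 0) :=
    fun x => by
      have := hpde x t ht
      rw [(he.hasFDerivAt_of_mem_strip hI (p := (x, t)) ht).hasDerivAt_slice_snd.deriv,
        (hflux x).deriv] at this
      linarith
  have hftc := integral_eq_sub_of_hasDerivAt (a := 0) (b := y) (fun x _ => hflux x)
    (((hq.continuousOn_fderiv_apply_strip hI (1, 0)).continuous_slice_of_mem ht).intervalIntegrable
      _ _)
  refine (he.hasDerivAt_intervalIntegral_strip hI ht 0 y).congr_deriv ?_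
  simp only [hbalance, intervalIntegral.integral_neg, hftc]
  ring

theorem hasDerivAt_cumulativeMass_along (hI : IsOpen I) (hα : ContDiffOn ℝ 1 α (univ ×ˢ I))
    (he : ContDiffOn ℝ 1 e (univ ×ˢ I))
    (hpde : ∀ x : ℝ, ∀ t ∈ I,
      deriv (fun s => e (x, s)) t + deriv (fun y => α (y, t) * e (y, t)) x = 0)
    {ξ : ℝ → ℝ} {τ : ℝ} (hτ : τ ∈ I) (hξ : HasDerivAt ξ (α (ξ τ, τ)) τ) :
    HasDerivAt (fun t => cumulativeMass e (ξ t) t) (α (0, τ) * e (0, τ)) τ := by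
  have hstrip : univ ×ˢ I ∈ 𝓝 (ξ τ, τ) := (isOpen_univ.prod hI).mem_nhds ⟨trivial, hτ⟩
  have hcont : ContinuousOn (fun p : ℝ × ℝ => α p * e p) (univ ×ˢ I) :=
    hα.continuousOn.mul he.continuousOn
  refine (HasDerivAt.comp_graph_of_partials (f := cumulativeMass e) (f₁ := fun y t => e (y, t))
    (f₂ := fun y t => α (0, t) * e (0, t) - α (y, t) * e (y, t))
    (eventually_of_mem hstrip fun v hv =>
      ((he.continuousOn.continuous_slice_of_mem hv.2).integral_hasStrictDerivAt 0 v.1).hasDerivAt)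
    (eventually_of_mem hstrip fun v hv => hasDerivAt_cumulativeMass_time hI hα he hpde v.1 hv.2)
    (he.continuousOn.continuousAt hstrip)
    (((hcont.continuousAt ((isOpen_univ.prod hI).mem_nhds ⟨trivial, hτ⟩)).comp
      (continuous_const.prodMk continuous_snd).continuousAt).sub (hcont.continuousAt hstrip))
    hξ).congr_deriv ?_
  rw [smul_eq_mul]
  ring

end ConservationLaw

theorem semiLagrangian_local_conservation_general
    (t₀ t₁ : ℝ) (ht : t₀ ≤ t₁)
    (α : ℝ × ℝ → ℝ) (hα : ContDiffOn ℝ 1 α (univ ×ˢ Icc t₀ t₁))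
    (e : ℝ × ℝ → ℝ) (he : ContDiffOn ℝ 1 e (univ ×ˢ Icc t₀ t₁))
    (hpde : ∀ x : ℝ, ∀ t ∈ Icc t₀ t₁,
      deriv (fun s => e (x, s)) t + deriv (fun y => α (y, t) * e (y, t)) x = 0)
    (xa xb : ℝ)
    (ξa ξb : ℝ → ℝ)
    (hξa : ∀ t ∈ Icc t₀ t₁, HasDerivWithinAt ξa (α (ξa t, t)) (Icc t₀ t₁) t)
    (hξb : ∀ t ∈ Icc t₀ t₁, HasDerivWithinAt ξb (α (ξb t, t)) (Icc t₀ t₁) t)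
    (hξat : ξa t₁ = xa) (hξbt : ξb t₁ = xb) :
    (∫ x in xa..xb, e (x, t₁)) = ∫ x in (ξa t₀)..(ξb t₀), e (x, t₀) := by
  subst hξat hξbt
  let F t := cumulativeMass e (ξb t) t - cumulativeMass e (ξa t) t
  have hmass : ∀ t ∈ Icc t₀ t₁, ∫ x in ξa t..ξb t, e (x, t) = F t := fun t ht =>
    have hint := (he.continuousOn.continuous_slice_of_mem ht).intervalIntegrable
      (μ := MeasureTheory.volume)
    (integral_interval_sub_left (hint 0 _) (hint 0 _)).symm
  have hFcont : ContinuousOn F (Icc t₀ t₁) :=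
    have hmass_cont := fun (ξ : ℝ → ℝ)
        (hξ : ∀ t ∈ Icc t₀ t₁, HasDerivWithinAt ξ (α (ξ t, t)) (Icc t₀ t₁) t) =>
      continuousOn_cumulativeMass_along ht he.continuousOn fun t ht => (hξ t ht).continuousWithinAt
    (hmass_cont ξb hξb).sub (hmass_cont ξa hξa)
  have hIoo : (univ : Set ℝ) ×ˢ Ioo t₀ t₁ ⊆ univ ×ˢ Icc t₀ t₁ :=
    prod_mono subset_rfl Ioo_subset_Icc_self
  have hmass_deriv (ξ : ℝ → ℝ)
      (hξ : ∀ t ∈ Icc t₀ t₁, HasDerivWithinAt ξ (α (ξ t, t)) (Icc t₀ t₁) t) (τ : ℝ)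
      (hτ : τ ∈ Ioo t₀ t₁) :
      HasDerivAt (fun t => cumulativeMass e (ξ t) t) (α (0, τ) * e (0, τ)) τ :=
    hasDerivAt_cumulativeMass_along isOpen_Ioo (hα.mono hIoo) (he.mono hIoo)
      (fun x t ht => hpde x t (Ioo_subset_Icc_self ht)) hτ
      ((hξ τ (Ioo_subset_Icc_self hτ)).hasDerivAt (Icc_mem_nhds hτ.1 hτ.2))
  have hFderiv : ∀ τ ∈ Ioo t₀ t₁, HasDerivAt F 0 τ := fun τ hτ =>
    ((hmass_deriv ξb hξb τ hτ).sub (hmass_deriv ξa hξa τ hτ)).congr_deriv (sub_self _)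
  rcases ht.eq_or_lt with rfl | hlt
  · rfl
  obtain ⟨c, -, hslope⟩ := exists_hasDerivAt_eq_slope F (fun _ => 0) hlt hFcont hFderiv
  rw [hmass t₁ ⟨ht, le_rfl⟩, hmass t₀ ⟨le_rfl, ht⟩]
  have := (div_eq_zero_iff.mp hslope.symm).resolve_right (sub_ne_zero.mpr hlt.ne')
  linarith

/-- Exact local conservation for the linear conservation law: the integral of
the solution over a space-time finite-volume cell bounded by characteristic
curves is preserved. -/
theorem semiLagrangian_local_conservation
    (t₀ t₁ : ℝ) (ht : t₀ ≤ t₁)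
    (α : ℝ × ℝ → ℝ) (hα : ContDiffOn ℝ 1 α (univ ×ˢ Icc t₀ t₁))
    (e : ℝ × ℝ → ℝ) (he : ContDiffOn ℝ 1 e (univ ×ˢ Icc t₀ t₁))
    (hpde : ∀ x : ℝ, ∀ t ∈ Icc t₀ t₁,
      deriv (fun s => e (x, s)) t + deriv (fun y => α (y, t) * e (y, t)) x = 0)
    (xa xb : ℝ) (hx : xa ≤ xb)
    (ξa ξb : ℝ → ℝ)
    (hξa : ∀ t ∈ Icc t₀ t₁, HasDerivWithinAt ξa (α (ξa t, t)) (Icc t₀ t₁) t)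
    (hξb : ∀ t ∈ Icc t₀ t₁, HasDerivWithinAt ξb (α (ξb t, t)) (Icc t₀ t₁) t)
    (hξat : ξa t₁ = xa) (hξbt : ξb t₁ = xb) :
    (∫ x in xa..xb, e (x, t₁)) = ∫ x in (ξa t₀)..(ξb t₀), e (x, t₀) :=
  semiLagrangian_local_conservation_general t₀ t₁ ht α hα e he hpde xa xb ξa ξb hξa hξb hξat hξbt
end
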